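/- Let B ∈ ℝ^{ℓ×d} with SVD B = UΣV^T and singular values σ₁ ≥ ... ≥ σ_ℓ. Define B' = sqrt(max(Σ² − σ_ℓ² I, 0))·V^T (the FD shrinkage step). Then B^T B − B'^T B' is positive semidefinite and ‖B^T B − B'^T B'‖₂ = σ_ℓ². -/
import Mathlib


open Matrix MeasureTheory

/-- Spectral (operator) norm of a real matrix, as the operator norm of the induced
Euclidean linear map. -/
noncomputable def specNorm {m n : Type*} [Fintype m] [Fintype n] [DecidableEq n]
    (A : Matrix m n ℝ) : ℝ :=
  ‖LinearMap.toContinuousLinearMap (Matrix.toEuclideanLin A)‖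

/-- Frobenius norm of a real matrix. -/
noncomputable def frobNorm {m n : Type*} [Fintype m] [Fintype n] (A : Matrix m n ℝ) : ℝ :=
  Real.sqrt (∑ i, ∑ j, (A i j) ^ 2)

/-- `Ak` is a best rank-`k` approximation of `A` in Frobenius norm. -/
def IsBestRankApprox {n d : Type*} [Fintype n] [Fintype d] [DecidableEq d]
    (A Ak : Matrix n d ℝ) (k : ℕ) : Prop :=
  Ak.rank ≤ k ∧ ∀ C : Matrix n d ℝ, C.rank ≤ k → frobNorm (A - Ak) ≤ frobNorm (A - C)

/-- The `j`-th largest eigenvalue of a Hermitian matrix (eigenvalues sorted decreasingly). -/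
noncomputable def sortedEigs {d : ℕ} {M : Matrix (Fin d) (Fin d) ℝ} (hM : M.IsHermitian)
    (j : Fin d) : ℝ :=
  ((List.ofFn hM.eigenvalues).insertionSort (· ≥ ·)).get
    ⟨j.1, by simp only [List.length_insertionSort, List.length_ofFn]; exact j.2⟩

section Aux

lemma smul_VVt_eq {ℓ d : ℕ} (V : Matrix (Fin d) (Fin ℓ) ℝ) (s : ℝ) :
    (s ^ 2) • (V * Vᵀ) = (s • Vᵀ)ᴴ * (s • Vᵀ) := by
  have : (s • Vᵀ)ᴴ = s • V := by
    simp [Matrix.conjTranspose_smul, Matrix.conjTranspose_eq_transpose_of_trivial]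
  rw [this, Matrix.smul_mul, Matrix.mul_smul, smul_smul, sq]

open scoped Matrix.Norms.L2Operator

lemma specNorm_eq_l2 {m n : Type*} [Fintype m] [Fintype n] [DecidableEq n]
    (A : Matrix m n ℝ) : specNorm A = ‖A‖ := rfl

lemma l2norm_one {ℓ : ℕ} (hℓ : 0 < ℓ) : ‖(1 : Matrix (Fin ℓ) (Fin ℓ) ℝ)‖ = 1 := by
  have h := Matrix.l2_opNorm_conjTranspose_mul_self (1 : Matrix (Fin ℓ) (Fin ℓ) ℝ)
  simp only [Matrix.conjTranspose_one, mul_one] at h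
  have hne : (1 : Matrix (Fin ℓ) (Fin ℓ) ℝ) ≠ 0 := by
    intro hcontra
    have := congrFun (congrFun hcontra ⟨0, hℓ⟩) ⟨0, hℓ⟩
    simp [Matrix.one_apply] at this
  have hpos : (0:ℝ) < ‖(1 : Matrix (Fin ℓ) (Fin ℓ) ℝ)‖ := by
    simpa [norm_pos_iff] using hne
  nlinarith

lemma aux_norm {ℓ d : ℕ} (hℓ : 0 < ℓ) (V : Matrix (Fin d) (Fin ℓ) ℝ)
    (hV : Vᵀ * V = 1) (s : ℝ) :
    specNorm ((s ^ 2) • (V * Vᵀ)) = s ^ 2 := by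
  have hVn : ‖V‖ = 1 := by
    have h := Matrix.l2_opNorm_conjTranspose_mul_self V
    rw [show Vᴴ = Vᵀ from Matrix.conjTranspose_eq_transpose_of_trivial V, hV,
      l2norm_one hℓ] at h
    nlinarith [norm_nonneg V]
  have hVtn : ‖Vᵀ‖ = 1 := by
    rw [show Vᵀ = Vᴴ from (Matrix.conjTranspose_eq_transpose_of_trivial V).symm,
      Matrix.l2_opNorm_conjTranspose, hVn]
  rw [specNorm_eq_l2, smul_VVt_eq, Matrix.l2_opNorm_conjTranspose_mul_self, norm_smul,
    hVtn, mul_one, Real.norm_eq_abs, ← sq, sq_abs]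

end Aux

/-- for `B = U Σ Vᵀ` an SVD with singular values `σ₁ ≥ ... ≥ σ_ℓ ≥ 0` and the
FD shrinkage `B' = sqrt(max(Σ² − σ_ℓ² I, 0)) Vᵀ`, the matrix `BᵀB − B'ᵀB'` is PSD and
`‖BᵀB − B'ᵀB'‖₂ = σ_ℓ²`. -/
theorem stmt14 {ℓ d : ℕ} (hℓ : 0 < ℓ) (B : Matrix (Fin ℓ) (Fin d) ℝ)
    (U : Matrix (Fin ℓ) (Fin ℓ) ℝ) (σ : Fin ℓ → ℝ) (V : Matrix (Fin d) (Fin ℓ) ℝ)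
    (hU : Uᵀ * U = 1) (hV : Vᵀ * V = 1) (hσmono : Antitone σ) (hσ0 : ∀ i, 0 ≤ σ i)
    (hSVD : B = U * Matrix.diagonal σ * Vᵀ)
    (B' : Matrix (Fin ℓ) (Fin d) ℝ)
    (hB' : B' = Matrix.diagonal
        (fun i => Real.sqrt (max (σ i ^ 2 - σ ⟨ℓ - 1, by omega⟩ ^ 2) 0)) * Vᵀ) :
    (Bᵀ * B - B'ᵀ * B').PosSemidef ∧
      specNorm (Bᵀ * B - B'ᵀ * B') = σ ⟨ℓ - 1, by omega⟩ ^ 2 := by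
  set s : ℝ := σ ⟨ℓ - 1, by omega⟩ with hs
  have hσs : ∀ i, s ^ 2 ≤ σ i ^ 2 := by
    intro i
    have hle : i ≤ (⟨ℓ - 1, by omega⟩ : Fin ℓ) := by
      rw [Fin.le_def]; exact Nat.le_pred_of_lt i.2
    exact pow_le_pow_left₀ (hσ0 _) (hσmono hle) 2
  have hmain : Bᵀ * B - B'ᵀ * B' = (s ^ 2) • (V * Vᵀ) := by
    subst hSVD hB'
    simp only [Matrix.transpose_mul, Matrix.transpose_transpose, Matrix.diagonal_transpose,
      Matrix.mul_assoc]
    rw [← Matrix.mul_assoc Uᵀ U, hU, Matrix.one_mul,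
      ← Matrix.mul_assoc (Matrix.diagonal σ), Matrix.diagonal_mul_diagonal,
      ← Matrix.mul_assoc (Matrix.diagonal _) (Matrix.diagonal _),
      Matrix.diagonal_mul_diagonal, ← Matrix.mul_sub, ← Matrix.sub_mul,
      Matrix.diagonal_sub]
    have hdiag : (fun i => σ i * σ i -
        Real.sqrt (max (σ i ^ 2 - s ^ 2) 0) * Real.sqrt (max (σ i ^ 2 - s ^ 2) 0))
        = fun _ => s ^ 2 := by
      funext i
      rw [Real.mul_self_sqrt (le_max_right _ _), max_eq_left (by nlinarith [hσs i]), ← sq]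
      ring
    rw [hdiag, ← Matrix.smul_one_eq_diagonal, Matrix.smul_mul, Matrix.mul_smul,
      Matrix.one_mul]
  rw [hmain]
  constructor
  · rw [smul_VVt_eq]
    exact Matrix.posSemidef_conjTranspose_mul_self _
  · have h2 : (0:ℝ) ≤ s := hσ0 _
    exact aux_norm hℓ V hV s
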